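/- arXiv:2003.05605 — 6 statements merged into one kernel-verified Lean document; each statement's English description precedes it below -/
import Mathlib

section
/- For every integer n ≥ 4, the oriented path Q_n is homomorphically equivalent to the directed path on 3 vertices if and only if n is odd. -/
/-- A homomorphism of digraphs (binary relations) is an arc-preserving vertex map. -/
def Hom {α : Type*} {β : Type*} (A : α → α → Prop) (B : β → β → Prop) (f : α → β) : Prop :=
  ∀ u v, A u v → B (f u) (f v)

/-- `A` admits a homomorphism to `B`. -/
def HomTo {α : Type*} {β : Type*} (A : α → α → Prop) (B : β → β → Prop) : Prop :=
  ∃ f : α → β, Hom A B f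

/-- Homomorphic equivalence of digraphs. -/
def HomEquiv {α : Type*} {β : Type*} (A : α → α → Prop) (B : β → β → Prop) : Prop :=
  HomTo A B ∧ HomTo B A

/-- An oriented graph: no symmetric arcs (in particular, no loops). -/
def IsOriented {α : Type*} (G : α → α → Prop) : Prop := ∀ u v, G u v → ¬ G v u

/-- A digraph is (weakly) connected: any two vertices are joined by a semi-walk. -/
def Conn {α : Type*} (G : α → α → Prop) : Prop :=
  ∀ u v : α, Relation.ReflTransGen (fun a b => G a b ∨ G b a) u v

/-- Direction of the `i`-th arc (between `q i` and `q (i+1)`) of the oriented path `Q n`: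
the first two arcs are forward, the middle section `(q 1, …, q (n-2))` alternates
(so its arcs `1 ≤ i ≤ n-3` are forward iff `i` is odd), and the last two arcs agree
in direction. -/
def QForward (n i : ℕ) : Prop :=
  i = 0 ∨ i = 1 ∨ (i + 3 ≤ n ∧ Odd i) ∨ (i = n - 2 ∧ Even n)

/-- The oriented path `Q n` on vertex set `Fin n`. -/
def QArc (n : ℕ) (u v : Fin n) : Prop :=
  ((v : ℕ) = (u : ℕ) + 1 ∧ QForward n (u : ℕ)) ∨
  ((u : ℕ) = (v : ℕ) + 1 ∧ ¬ QForward n (v : ℕ))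

/-- The oriented cycle `AC n` on vertex set `Fin n`, obtained by identifying the endpoints
of the alternating path on `n+1` vertices beginning with a forward arc: the arc between
`a i` and `a ((i+1) % n)` is forward iff `i` is even. -/
def ACArc (n : ℕ) (u v : Fin n) : Prop :=
  ((v : ℕ) = ((u : ℕ) + 1) % n ∧ Even (u : ℕ)) ∨
  ((u : ℕ) = ((v : ℕ) + 1) % n ∧ ¬ Even (v : ℕ))

/-- The directed path on `k` vertices. -/
def DiPath (k : ℕ) (u v : Fin k) : Prop := (v : ℕ) = (u : ℕ) + 1

/-- The transitive tournament on `k` vertices. -/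
def TT (k : ℕ) (u v : Fin k) : Prop := u < v

/-- `(A, B)` is a duality pair: for every digraph `G`, `A → G` iff `G ↛ B`. -/
def DualityPair {α : Type*} {β : Type*} (A : α → α → Prop) (B : β → β → Prop) : Prop :=
  ∀ (W : Type) (G : W → W → Prop), HomTo A G ↔ ¬ HomTo G B

/-- `o` is an orientation of the undirected graph `G`: every arc of `o` lies on an edge
of `G`, and every edge of `G` gets exactly one of the two directions. -/
def IsOrientationOf {V : Type*} (o : V → V → Prop) (G : SimpleGraph V) : Prop :=
  (∀ u v, o u v → G.Adj u v) ∧ ∀ u v, G.Adj u v → Xor' (o u v) (o v u)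

/-- The undirected cycle on `k` vertices. -/
def UCycle (k : ℕ) : SimpleGraph (Fin k) :=
  SimpleGraph.fromRel (fun u v => (v : ℕ) = ((u : ℕ) + 1) % k)

/-!
A homomorphism `Q n → P⃗₃` is a height function climbing by one along forward arcs and
descending by one along backward arcs. The two initial forward arcs force heights `0, 1, 2`
on `q 0, q 1, q 2`, after which the alternating middle section forces height `2` at even and
`1` at odd positions up to `q (n-2)`. For even `n` the last two arcs are forward, so `q (n-1)`
would need height `3`. For odd `n` the last two arcs are backward, and the heights
`0, 1, 2, 1, …, 2, 1, 0` work; conversely `P⃗₃` maps onto the initial segment `q 0 → q 1 → q 2`.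
-/

lemma qForward_zero (n : ℕ) : QForward n 0 := Or.inl rfl

lemma qForward_one (n : ℕ) : QForward n 1 := Or.inr (Or.inl rfl)

lemma qForward_iff_odd {n i : ℕ} (h2 : 2 ≤ i) (hi : i + 3 ≤ n) : QForward n i ↔ Odd i := by
  constructor
  · rintro (h | h | ⟨-, h⟩ | ⟨h, -⟩) <;> first | exact h | omega
  · exact fun h => Or.inr (Or.inr (Or.inl ⟨hi, h⟩))

lemma qForward_sub_two_iff_even {n : ℕ} (hn : 4 ≤ n) : QForward n (n - 2) ↔ Even n := by
  constructor
  · rintro (h | h | ⟨h, -⟩ | ⟨-, h⟩) <;> first | exact h | omega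
  · exact fun h => Or.inr (Or.inr (Or.inr ⟨rfl, h⟩))

namespace Hom

variable {n k : ℕ}

lemma val_succ_of_qForward {f : Fin n → Fin k} (hf : Hom (QArc n) (DiPath k) f) {i : ℕ}
    (hi : i + 1 < n) (hq : QForward n i) : (f ⟨i + 1, hi⟩ : ℕ) = f ⟨i, by omega⟩ + 1 :=
  hf _ _ (Or.inl ⟨rfl, hq⟩)

lemma val_of_not_qForward {f : Fin n → Fin k} (hf : Hom (QArc n) (DiPath k) f) {i : ℕ}
    (hi : i + 1 < n) (hq : ¬ QForward n i) : (f ⟨i, by omega⟩ : ℕ) = f ⟨i + 1, hi⟩ + 1 :=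
  hf _ _ (Or.inr ⟨rfl, hq⟩)

lemma qArc_diPath_three_val {f : Fin n → Fin 3} (hf : Hom (QArc n) (DiPath 3) f) {i : ℕ}
    (h2 : 2 ≤ i) (hi : i + 2 ≤ n) : (f ⟨i, by omega⟩ : ℕ) = if Even i then 2 else 1 := by
  induction i, h2 using Nat.le_induction with
  | base =>
    have h01 := hf.val_succ_of_qForward (i := 0) (by omega) (qForward_zero n)
    have h12 := hf.val_succ_of_qForward (i := 1) (by omega) (qForward_one n)
    have h2lt := (f ⟨2, by omega⟩).isLt
    simp only [zero_add, Nat.reduceAdd, even_two, if_true] at h01 h12 ⊢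
    omega
  | succ i h2 ih =>
    have ih := ih (by omega)
    rcases Nat.even_or_odd i with he | ho
    · have hq : ¬ QForward n i := by
        rw [qForward_iff_odd h2 (by omega), Nat.not_odd_iff_even]; exact he
      have hstep := hf.val_of_not_qForward (by omega) hq
      rw [if_pos he] at ih
      rw [if_neg (Nat.not_even_iff_odd.mpr he.add_one)]
      omega
    · have hq : QForward n i := (qForward_iff_odd h2 (by omega)).mpr ho
      have hstep := hf.val_succ_of_qForward (by omega) hq
      rw [if_neg (Nat.not_even_iff_odd.mpr ho)] at ih
      rw [if_pos ho.add_one]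
      omega

end Hom

lemma not_homTo_qArc_diPath_three_of_even {n : ℕ} (hn : 4 ≤ n) (he : Even n) :
    ¬ HomTo (QArc n) (DiPath 3) := by
  rintro ⟨f, hf⟩
  have h2 : (f ⟨n - 2, by omega⟩ : ℕ) = 2 := by
    rw [hf.qArc_diPath_three_val (by omega) (by omega), if_pos]
    exact (Nat.even_sub (by omega)).mpr (iff_of_true he even_two)
  have hlast := hf.val_succ_of_qForward (i := n - 2) (by omega)
    ((qForward_sub_two_iff_even hn).mpr he)
  have hlt := (f ⟨n - 2 + 1, by omega⟩).isLt
  omega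

def qHeight (n i : ℕ) : ℕ := if i = 0 ∨ i = n - 1 then 0 else if Odd i then 1 else 2

lemma qHeight_lt_three (n i : ℕ) : qHeight n i < 3 := by
  unfold qHeight; split_ifs <;> omega

lemma homTo_qArc_diPath_three_of_odd {n : ℕ} (hn : 4 ≤ n) (ho : Odd n) :
    HomTo (QArc n) (DiPath 3) := by
  refine ⟨fun i => ⟨qHeight n i, qHeight_lt_three n i⟩, ?_⟩
  rintro ⟨u, hu⟩ ⟨v, hv⟩ (⟨huv, hq⟩ | ⟨huv, hq⟩) <;>
    simp only [DiPath, qHeight, QForward, Nat.odd_iff, Nat.even_iff] at * <;>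
    split_ifs <;> omega

lemma homTo_diPath_three_qArc {n : ℕ} (hn : 3 ≤ n) : HomTo (DiPath 3) (QArc n) := by
  refine ⟨fun j => ⟨j, by omega⟩, fun u v huv => Or.inl ⟨huv, ?_⟩⟩
  obtain h | h : (u : ℕ) = 0 ∨ (u : ℕ) = 1 := by
    have := v.isLt; simp only [DiPath] at huv; omega
  · simpa only [h] using qForward_zero n
  · simpa only [h] using qForward_one n

/-- For every `n ≥ 4`, `Q n` is homomorphically equivalent to `P⃗₃` iff `n` is odd. -/
theorem stmt3 (n : ℕ) (hn : 4 ≤ n) : HomEquiv (QArc n) (DiPath 3) ↔ Odd n := by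
  refine ⟨fun h => ?_, fun ho => ⟨homTo_qArc_diPath_three_of_odd hn ho,
    homTo_diPath_three_qArc (by omega)⟩⟩
  by_contra ho
  exact not_homTo_qArc_diPath_three_of_even hn (Nat.not_odd_iff_even.mp ho) h.1
end

section
/- For every integer n ≥ 4, the oriented path Q_{n+1} does not admit a homomorphism to the oriented cycle AC_n. -/
lemma Nat.add_one_mod_eq_or {n x : ℕ} (hx : x < n) :
    (x + 1) % n = x + 1 ∨ (x + 1 = n ∧ (x + 1) % n = 0) := by
  rcases Nat.lt_or_ge (x + 1) n with h | h
  · exact Or.inl (Nat.mod_eq_of_lt h)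
  · have h : x + 1 = n := by omega
    exact Or.inr ⟨h, by rw [h, Nat.mod_self]⟩

lemma ACArc.val_cases {n : ℕ} {u v : Fin n} (h : ACArc n u v) :
    ((u : ℕ) % 2 = 0 ∧ ((v : ℕ) = u + 1 ∨ (u : ℕ) + 1 = n ∧ (v : ℕ) = 0)) ∨
    ((v : ℕ) % 2 = 1 ∧ ((u : ℕ) = v + 1 ∨ (v : ℕ) + 1 = n ∧ (u : ℕ) = 0)) := by
  rcases h with ⟨h, hu⟩ | ⟨h, hv⟩
  · exact Or.inl ⟨Nat.even_iff.mp hu, h ▸ Nat.add_one_mod_eq_or u.isLt⟩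
  · exact Or.inr ⟨Nat.odd_iff.mp (Nat.not_even_iff_odd.mp hv), h ▸ Nat.add_one_mod_eq_or v.isLt⟩

lemma ACArc.eq_of_two_path {n : ℕ} (hn : 2 ≤ n) {a b c : Fin n} (hab : ACArc n a b)
    (hbc : ACArc n b c) : Odd n ∧ (a : ℕ) = n - 1 ∧ (b : ℕ) = 0 ∧ (c : ℕ) = 1 := by
  have := hab.val_cases; have := hbc.val_cases
  have := a.isLt; have := b.isLt; have := c.isLt
  rw [Nat.odd_iff]
  omega

lemma ACArc.natCast_eq_add_one_or_sub_one {n : ℕ} {u v : Fin n} (h : ACArc n u v ∨ ACArc n v u) :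
    ((v : ℕ) : ZMod n) = (u : ℕ) + 1 ∨ ((v : ℕ) : ZMod n) = (u : ℕ) - 1 := by
  rcases h with (⟨h, -⟩ | ⟨h, -⟩) | (⟨h, -⟩ | ⟨h, -⟩)
  · left; rw [h, ZMod.natCast_mod, Nat.cast_succ]
  · right; rw [h, ZMod.natCast_mod, Nat.cast_succ, add_sub_cancel_right]
  · right; rw [h, ZMod.natCast_mod, Nat.cast_succ, add_sub_cancel_right]
  · left; rw [h, ZMod.natCast_mod, Nat.cast_succ]

lemma exists_int_of_unit_steps {R : Type*} [AddCommGroupWithOne R] (g : ℕ → R) (k : ℕ)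
    (hstep : ∀ i < k, g (i + 1) = g i + 1 ∨ g (i + 1) = g i - 1) :
    ∃ d : ℤ, |d| ≤ k ∧ Even (d + k) ∧ g k = g 0 + d := by
  induction k with
  | zero => exact ⟨0, by simp, by simp, by simp⟩
  | succ k ih =>
    obtain ⟨d, hd, hpar, hgk⟩ := ih fun i hi => hstep i (by omega)
    rcases hstep k (by omega) with h | h
    · refine ⟨d + 1, ?_, ?_, ?_⟩
      · push_cast; grind [abs_le]
      · rw [show d + 1 + ((k + 1 : ℕ) : ℤ) = d + k + 2 by push_cast; ring]
        exact hpar.add even_two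
      · rw [h, hgk]; push_cast; abel
    · refine ⟨d - 1, ?_, ?_, ?_⟩
      · push_cast; grind [abs_le]
      · rwa [show d - 1 + ((k + 1 : ℕ) : ℤ) = d + k by push_cast; ring]
      · rw [h, hgk]; push_cast; abel

section
open Fin.NatCast
variable {m : ℕ} [NeZero m] {i : ℕ}

lemma QArc.natCast_of_forward (hi : i + 1 < m) (h : QForward m i) :
    QArc m (i : Fin m) ((i + 1 : ℕ) : Fin m) := by
  left
  rw [Fin.val_cast_of_lt hi, Fin.val_cast_of_lt (by omega)]
  exact ⟨rfl, h⟩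

lemma QArc.natCast_succ (hi : i + 1 < m) :
    QArc m (i : Fin m) ((i + 1 : ℕ) : Fin m) ∨ QArc m ((i + 1 : ℕ) : Fin m) (i : Fin m) := by
  by_cases h : QForward m i
  · exact Or.inl (natCast_of_forward hi h)
  · right; right
    rw [Fin.val_cast_of_lt hi, Fin.val_cast_of_lt (by omega)]
    exact ⟨rfl, h⟩

end

open Fin.NatCast in
/-- For every `n ≥ 4`, the oriented path `Q (n+1)` is not homomorphic to `AC n`. -/
theorem stmt5 (n : ℕ) (hn : 4 ≤ n) : ¬ HomTo (QArc (n + 1)) (ACArc n) := by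
  rintro ⟨f, hf⟩
  let g : ℕ → ZMod n := fun i => ((f i : ℕ) : ZMod n)
  obtain ⟨hodd, -, -, hg2⟩ := ACArc.eq_of_two_path (by omega)
    (hf _ _ (QArc.natCast_of_forward (i := 0) (by omega) (by simp [QForward])))
    (hf _ _ (QArc.natCast_of_forward (i := 1) (by omega) (by simp [QForward])))
  obtain ⟨-, hgn, -, -⟩ := ACArc.eq_of_two_path (by omega)
    (hf _ _ (QArc.natCast_of_forward (i := n - 2) (by omega)
      (.inr <| .inr <| .inl ⟨by omega, by grind⟩)))
    (hf _ _ (QArc.natCast_of_forward (i := n - 2 + 1) (by omega)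
      (.inr <| .inr <| .inr ⟨by omega, by grind⟩)))
  obtain ⟨d, hd, hpar, hgd⟩ := exists_int_of_unit_steps (fun j => g (2 + j)) (n - 4)
    fun i hi => ACArc.natCast_eq_add_one_or_sub_one <|
      (QArc.natCast_succ (i := 2 + i) (by omega)).imp (hf _ _) (hf _ _)
  rw [show 2 + (n - 4) = n - 2 by omega] at hgd
  simp only [g, hgn, hg2, add_zero] at hgd
  rw [Nat.cast_sub (by omega), ZMod.natCast_self] at hgd
  have hdvd : (n : ℤ) ∣ d + 2 := by
    rw [← ZMod.intCast_zmod_eq_zero_iff_dvd]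
    push_cast
    linear_combination -hgd
  have hd2 : d = -2 := by
    have := Int.eq_zero_of_abs_lt_dvd hdvd (by grind [abs_lt, abs_le])
    omega
  rw [hd2] at hpar
  grind
end

section
/- For every odd integer n ≥ 5, every homomorphism from the oriented path Q_{n+1} to the oriented cycle AC_n (if any existed) cannot be surjective on vertices. -/
/-! In `AC n` the only vertex with both an in-arc and an out-arc is `a 0`, and for odd `n` its
only out-neighbour is `a 1`. In `Q (n+1)` the vertices `q 1` and `q (n-1)` both have an in-arc and
an out-arc, the latter ending at `q 2` and `q n`. Hence a homomorphism identifies `q 1` with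
`q (n-1)` and `q 2` with `q n`, so it takes at most `n - 1` values. -/

lemma Fintype.card_add_two_le_of_surjective {α β : Type*} [Fintype α] [Fintype β]
    [DecidableEq α] {f : α → β} (hf : Function.Surjective f) {a a' b b' : α}
    (ha : f a = f a') (hb : f b = f b') (hab' : a' ≠ b') (ha' : a ∉ ({a', b'} : Finset α))
    (hb' : b ∉ ({a', b'} : Finset α)) :
    Fintype.card β + 2 ≤ Fintype.card α := by
  have hsurj : Set.SurjOn f ↑(Finset.univ \ {a', b'}) ↑(Finset.univ : Finset β) := by
    intro y _
    obtain ⟨x, rfl⟩ := hf y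
    by_cases hx : x ∈ ({a', b'} : Finset α)
    · rcases Finset.mem_insert.mp hx with rfl | hx
      · exact ⟨a, by simpa using ha', ha⟩
      · rw [Finset.mem_singleton.mp hx]
        exact ⟨b, by simpa using hb', hb⟩
    · exact ⟨x, by simpa using hx, rfl⟩
  have hcard := Finset.card_le_card_of_surjOn f hsurj
  rw [Finset.card_univ_sdiff, Finset.card_pair hab'] at hcard
  have hpair := Finset.card_le_univ ({a', b'} : Finset α)
  rw [Finset.card_pair hab'] at hpair
  simp only [Finset.card_univ] at hcard
  omega

lemma Nat.succ_mod_eq_or {a n : ℕ} (h : a < n) :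
    (a + 1) % n = a + 1 ∨ a + 1 = n ∧ (a + 1) % n = 0 := by
  rcases Nat.lt_or_ge (a + 1) n with h' | h'
  · exact Or.inl (Nat.mod_eq_of_lt h')
  · have hn : a + 1 = n := by omega
    exact Or.inr ⟨hn, by rw [hn, Nat.mod_self]⟩

lemma ACArc.even_tail {n : ℕ} {u v : Fin n} (huv : ACArc n u v) : Even (u : ℕ) := by
  rcases huv with ⟨-, hu⟩ | ⟨hu, hv⟩
  · exact hu
  · rw [Nat.not_even_iff_odd] at hv
    rcases Nat.succ_mod_eq_or v.isLt with h | ⟨-, h⟩ <;> rw [hu, h]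
    exacts [hv.add_one, Even.zero]

lemma ACArc.odd_or_zero_head {n : ℕ} {u v : Fin n} (huv : ACArc n u v) :
    Odd (v : ℕ) ∨ (v : ℕ) = 0 := by
  rcases huv with ⟨hv, hu⟩ | ⟨-, hv⟩
  · rcases Nat.succ_mod_eq_or u.isLt with h | ⟨-, h⟩ <;> rw [hv, h]
    exacts [Or.inl hu.add_one, Or.inr rfl]
  · exact Or.inl (Nat.not_even_iff_odd.mp hv)

lemma ACArc.val_eq_zero {n : ℕ} {u v w : Fin n} (huv : ACArc n u v) (hvw : ACArc n v w) :
    (v : ℕ) = 0 :=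
  huv.odd_or_zero_head.resolve_left (Nat.not_odd_iff_even.mpr hvw.even_tail)

/-- Since `n` is odd, the arc between `a (n-1)` and `a 0` points into `a 0`. -/
lemma ACArc.val_eq_one_of_val_eq_zero {n : ℕ} (hodd : Odd n) (hn : 1 < n) {v w : Fin n}
    (hv : (v : ℕ) = 0) (hvw : ACArc n v w) : (w : ℕ) = 1 := by
  rcases hvw with ⟨hw, -⟩ | ⟨h0, hw⟩
  · rw [hw, hv, Nat.zero_add, Nat.mod_eq_of_lt hn]
  · rcases Nat.succ_mod_eq_or w.isLt with h | ⟨hlast, -⟩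
    · omega
    · have : Even (w : ℕ) := by
        rw [Nat.even_iff]; rw [Nat.odd_iff] at hodd; omega
      exact absurd this hw

lemma qArc_of_forward {m : ℕ} {u v : Fin m} (huv : (v : ℕ) = u + 1) (hu : QForward m u) :
    QArc m u v :=
  Or.inl ⟨huv, hu⟩

/-- The arcs of `Q (n+1)` entering and leaving its inner vertices `q 1` and `q (n-1)`. -/
lemma qForward_of_odd {n : ℕ} (hodd : Odd n) (hn : 3 ≤ n) :
    QForward (n + 1) 0 ∧ QForward (n + 1) 1 ∧ QForward (n + 1) (n - 2) ∧
      QForward (n + 1) (n - 1) := by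
  have hodd' := Nat.odd_iff.mp hodd
  refine ⟨Or.inl rfl, Or.inr (Or.inl rfl), Or.inr (Or.inr (Or.inl ⟨by omega, ?_⟩)),
    Or.inr (Or.inr (Or.inr ⟨by omega, hodd.add_one⟩))⟩
  rw [Nat.odd_iff]; omega

/-- For every odd `n ≥ 5`, no homomorphism from `Q (n+1)` to `AC n` is surjective on
vertices. -/
theorem stmt8 (n : ℕ) (hodd : Odd n) (hn : 5 ≤ n) (f : Fin (n + 1) → Fin n)
    (hf : Hom (QArc (n + 1)) (ACArc n) f) : ¬ Function.Surjective f := by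
  intro hsurj
  obtain ⟨h0, h1, h2, h3⟩ := qForward_of_odd hodd (by omega)
  have a01 : QArc (n + 1) ⟨0, by omega⟩ ⟨1, by omega⟩ := qArc_of_forward rfl h0
  have a12 : QArc (n + 1) ⟨1, by omega⟩ ⟨2, by omega⟩ := qArc_of_forward rfl h1
  have a23 : QArc (n + 1) ⟨n - 2, by omega⟩ ⟨n - 1, by omega⟩ :=
    qArc_of_forward (by dsimp only; omega) h2
  have a34 : QArc (n + 1) ⟨n - 1, by omega⟩ ⟨n, by omega⟩ :=
    qArc_of_forward (by dsimp only; omega) h3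
  have e1 := ACArc.val_eq_zero (hf _ _ a01) (hf _ _ a12)
  have e2 := ACArc.val_eq_zero (hf _ _ a23) (hf _ _ a34)
  have e3 := ACArc.val_eq_one_of_val_eq_zero hodd (by omega) e1 (hf _ _ a12)
  have e4 := ACArc.val_eq_one_of_val_eq_zero hodd (by omega) e2 (hf _ _ a34)
  have hcard := Fintype.card_add_two_le_of_surjective hsurj (Fin.ext (e1.trans e2.symm))
    (Fin.ext (e3.trans e4.symm)) (by simp [Fin.ext_iff]; omega) (by simp [Fin.ext_iff]; omega)
    (by simp [Fin.ext_iff]; omega)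
  simp at hcard
end

section
/- Let n ≥ 5 be odd and G a connected oriented graph with n-cyclic cover (A_0, ..., A_m, D_m, ..., D_1). If A_0 is an independent set and there are no arcs between A_i and D_i for any i ∈ {1, ..., m−1}, then the map sending each vertex of A_i to a_i and each vertex of D_i to a_{n−i} is a homomorphism from G to AC_n. -/
/-- `A0 G` : the set of vertices with both an in-neighbour and an out-neighbour. -/
def A0 {V : Type*} (G : V → V → Prop) : Set V := {v | (∃ u, G u v) ∧ ∃ w, G v w}

/-- Auxiliary recursion for the `n`-cyclic cover: `cycAux G i = (Aᵢ, Dᵢ, Cᵢ)` where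
`Cᵢ = A₀ ∪ A₁ ∪ D₁ ∪ ⋯ ∪ Aᵢ ∪ Dᵢ`. -/
def cycAux {V : Type*} (G : V → V → Prop) : ℕ → Set V × Set V × Set V
  | 0 => (A0 G, ∅, A0 G)
  | 1 =>
      ({v | v ∉ A0 G ∧ ∃ u ∈ A0 G, G u v},
       {v | v ∉ A0 G ∧ ∃ u ∈ A0 G, G v u},
       A0 G ∪ {v | v ∉ A0 G ∧ ∃ u ∈ A0 G, G u v} ∪ {v | v ∉ A0 G ∧ ∃ u ∈ A0 G, G v u})
  | (i + 2) =>
      let p := cycAux G (i + 1)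
      ({v | v ∉ p.2.2 ∧ ∃ u ∈ p.1, G u v ∨ G v u},
       {v | v ∉ p.2.2 ∧ ∃ u ∈ p.2.1, G u v ∨ G v u},
       p.2.2 ∪ {v | v ∉ p.2.2 ∧ ∃ u ∈ p.1, G u v ∨ G v u} ∪
         {v | v ∉ p.2.2 ∧ ∃ u ∈ p.2.1, G u v ∨ G v u})

/-- The condition deciding the orientation of the final step of the `n`-cyclic cover:
every vertex of `A_{m-1}` has out-degree 0 and every vertex of `D_{m-1}` has in-degree 0. -/
def lastStepCond {V : Type*} (G : V → V → Prop) (m : ℕ) : Prop :=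
  (∀ v ∈ (cycAux G (m - 1)).1, ∀ w, ¬ G v w) ∧ (∀ v ∈ (cycAux G (m - 1)).2.1, ∀ u, ¬ G u v)

open Classical in
/-- The set `Aᵢ` of the `n`-cyclic cover (with `m = (n-1)/2`). -/
noncomputable def coverA {V : Type*} (G : V → V → Prop) (m i : ℕ) : Set V :=
  if i < m then (cycAux G i).1
  else if lastStepCond G m then {v | v ∉ (cycAux G (m - 1)).2.2 ∧ ∀ u, ¬ G u v}
  else {v | v ∉ (cycAux G (m - 1)).2.2 ∧ ∀ w, ¬ G v w}

open Classical in
/-- The set `Dᵢ` of the `n`-cyclic cover (with `m = (n-1)/2`). -/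
noncomputable def coverD {V : Type*} (G : V → V → Prop) (m i : ℕ) : Set V :=
  if i < m then (cycAux G i).2.1
  else if lastStepCond G m then {v | v ∉ (cycAux G (m - 1)).2.2 ∧ ∀ w, ¬ G v w}
  else {v | v ∉ (cycAux G (m - 1)).2.2 ∧ ∀ u, ¬ G u v}


theorem Conn.forall_mem {α : Type*} {G : α → α → Prop} (hG : Conn G) {S : Set α} {a : α}
    (ha : a ∈ S) (hS : ∀ x y, x ∈ S → (G x y ∨ G y x) → y ∈ S) (v : α) : v ∈ S := by
  induction hG a v with
  | refl => exact ha
  | tail _ hxy ih => exact hS _ _ ih hxy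

theorem ACArc.of_even_of_odd {n : ℕ} {u v : Fin n} (hu : Even (u : ℕ)) (hv : Odd (v : ℕ))
    (h : (v : ℕ) = u + 1 ∨ (u : ℕ) = v + 1) : ACArc n u v := by
  have := u.isLt
  have := v.isLt
  rcases h with h | h
  · exact Or.inl ⟨by rw [Nat.mod_eq_of_lt (by omega), h], hu⟩
  · exact Or.inr ⟨by rw [Nat.mod_eq_of_lt (by omega), h], Nat.not_even_iff_odd.2 hv⟩

namespace CyclicCover

open Set

variable {V : Type*} {G : V → V → Prop} {i j k m : ℕ} {u v : V}

def A (G : V → V → Prop) (i : ℕ) : Set V := (cycAux G i).1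

def D (G : V → V → Prop) (i : ℕ) : Set V := (cycAux G i).2.1

def C (G : V → V → Prop) (i : ℕ) : Set V := (cycAux G i).2.2

theorem C_succ (i : ℕ) : C G (i + 1) = C G i ∪ A G (i + 1) ∪ D G (i + 1) := by
  cases i <;> rfl

theorem C_mono : Monotone (C G) :=
  monotone_nat_of_le_succ fun i => by
    rw [C_succ]
    exact subset_union_left.trans subset_union_left

theorem A0_subset_C (i : ℕ) : A0 G ⊆ C G i := C_mono (Nat.zero_le i)

theorem A_subset_C : ∀ i, A G i ⊆ C G i
  | 0 => subset_rfl
  | i + 1 => by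
    rw [C_succ]
    exact subset_union_right.trans subset_union_left

theorem D_subset_C : ∀ i, D G i ⊆ C G i
  | 0 => empty_subset _
  | i + 1 => by
    rw [C_succ]
    exact subset_union_right

theorem notMem_C_of_mem_A (hv : v ∈ A G (i + 1)) : v ∉ C G i := by
  cases i <;> exact hv.1

theorem notMem_C_of_mem_D (hv : v ∈ D G (i + 1)) : v ∉ C G i := by
  cases i <;> exact hv.1

theorem mem_C_succ_of_adj (hu : u ∈ C G i) (huv : G u v ∨ G v u) : v ∈ C G (i + 1) := by
  induction i generalizing u with
  | zero =>
    by_cases hv : v ∈ A0 G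
    · exact A0_subset_C 1 hv
    rw [C_succ]
    rcases huv with huv | hvu
    · exact Or.inl (Or.inr ⟨hv, u, hu, huv⟩)
    · exact Or.inr ⟨hv, u, hu, hvu⟩
  | succ i ih =>
    by_cases hv : v ∈ C G (i + 1)
    · exact C_mono (Nat.le_succ _) hv
    rw [C_succ] at hu ⊢
    rcases hu with (hu | hu) | hu
    · exact absurd (ih hu huv) hv
    · exact Or.inl (Or.inr ⟨hv, u, hu, huv⟩)
    · exact Or.inr ⟨hv, u, hu, huv⟩

theorem exists_mem_A_or_D_of_mem_C (hv : v ∈ C G k) : ∃ j ≤ k, v ∈ A G j ∨ v ∈ D G j := by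
  induction k with
  | zero => exact ⟨0, le_rfl, Or.inl hv⟩
  | succ k ih =>
    rw [C_succ] at hv
    rcases hv with (hv | hv) | hv
    · obtain ⟨j, hj, h⟩ := ih hv
      exact ⟨j, hj.trans k.le_succ, h⟩
    · exact ⟨k + 1, le_rfl, Or.inl hv⟩
    · exact ⟨k + 1, le_rfl, Or.inr hv⟩

/-- Every vertex outside `A₀` has no in-arcs or no out-arcs, so the arc to its parent in the
cover fixes its direction. -/
theorem parity_of_mem_A (hv : v ∈ A G (k + 1)) :
    (∀ w, G v w → Even (k + 1)) ∧ ∀ w, G w v → Odd (k + 1) := by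
  induction k generalizing v with
  | zero =>
    obtain ⟨hvA0, u, -, huv⟩ := hv
    exact ⟨fun w hvw => (hvA0 ⟨⟨u, huv⟩, w, hvw⟩).elim, fun _ _ => odd_one⟩
  | succ k ih =>
    obtain ⟨hvC, u, hu, huv | hvu⟩ := hv
    all_goals have hvA0 : v ∉ A0 G := fun h => hvC (A0_subset_C _ h)
    · exact ⟨fun w hvw => (hvA0 ⟨⟨u, huv⟩, w, hvw⟩).elim,
        fun _ _ => ((ih hu).1 v huv).add_one⟩
    · exact ⟨fun _ _ => ((ih hu).2 v hvu).add_one,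
        fun w hwv => (hvA0 ⟨⟨w, hwv⟩, u, hvu⟩).elim⟩

theorem parity_of_mem_D (hv : v ∈ D G (k + 1)) :
    (∀ w, G v w → Odd (k + 1)) ∧ ∀ w, G w v → Even (k + 1) := by
  induction k generalizing v with
  | zero =>
    obtain ⟨hvA0, u, -, hvu⟩ := hv
    exact ⟨fun _ _ => odd_one, fun w hwv => (hvA0 ⟨⟨w, hwv⟩, u, hvu⟩).elim⟩
  | succ k ih =>
    obtain ⟨hvC, u, hu, huv | hvu⟩ := hv
    all_goals have hvA0 : v ∉ A0 G := fun h => hvC (A0_subset_C _ h)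
    · exact ⟨fun w hvw => (hvA0 ⟨⟨u, huv⟩, w, hvw⟩).elim,
        fun _ _ => ((ih hu).1 v huv).add_one⟩
    · exact ⟨fun _ _ => ((ih hu).2 v hvu).add_one,
        fun w hwv => (hvA0 ⟨⟨w, hwv⟩, u, hvu⟩).elim⟩

theorem lastStepCond_of_odd (hm : Odd (m - 1)) : lastStepCond G m := by
  obtain ⟨k, hk⟩ : ∃ k, m - 1 = k + 1 := ⟨m - 2, by rcases hm with ⟨r, hr⟩; omega⟩
  rw [hk] at hm
  refine ⟨fun v hv w hvw => ?_, fun v hv w hwv => ?_⟩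
  · rw [hk] at hv
    exact Nat.not_even_iff_odd.2 hm ((parity_of_mem_A hv).1 w hvw)
  · rw [hk] at hv
    exact Nat.not_even_iff_odd.2 hm ((parity_of_mem_D hv).2 w hwv)

theorem forall_mem_C_of_empty (hconn : Conn G) (hA0 : (A0 G).Nonempty)
    (hA : A G (k + 1) = ∅) (hD : D G (k + 1) = ∅) (v : V) : v ∈ C G k := by
  obtain ⟨a, ha⟩ := hA0
  refine hconn.forall_mem (A0_subset_C k ha) (fun x y hx hxy => ?_) v
  have := mem_C_succ_of_adj hx hxy
  rwa [C_succ, hA, hD, union_empty, union_empty] at this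

/-- If `lastStepCond` holds although `m - 1` is even, then `Aₘ₋₁ = Dₘ₋₁ = ∅`, so
`C (m - 1)` is everything. -/
theorem even_of_lastStepCond (hconn : Conn G) (hA0 : (A0 G).Nonempty) (hm : 2 ≤ m)
    (h : lastStepCond G m) (hv : v ∉ C G (m - 1)) : Even m := by
  by_contra hodd
  obtain ⟨r, hr⟩ := Nat.not_even_iff_odd.1 hodd
  obtain ⟨k, hk⟩ : ∃ k, m - 1 = k + 2 := ⟨m - 3, by omega⟩
  have hk1 : Odd (k + 1) := ⟨r - 1, by omega⟩
  rw [lastStepCond, hk] at h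
  have hA : A G (k + 2) = ∅ := eq_empty_of_forall_notMem fun x hx => by
    obtain ⟨-, y, hy, hyx | hxy⟩ := id hx
    · exact Nat.not_even_iff_odd.2 hk1 ((parity_of_mem_A hy).1 x hyx)
    · exact h.1 x hx y hxy
  have hD : D G (k + 2) = ∅ := eq_empty_of_forall_notMem fun x hx => by
    obtain ⟨-, y, hy, hyx | hxy⟩ := id hx
    · exact h.2 x hx y hyx
    · exact Nat.not_even_iff_odd.2 hk1 ((parity_of_mem_D hy).2 x hxy)
  rw [hk] at hv
  exact hv (C_mono (k + 1).le_succ (forall_mem_C_of_empty hconn hA0 hA hD v))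

theorem odd_of_not_lastStepCond (hm : 1 ≤ m) (h : ¬ lastStepCond G m) : Odd m := by
  by_contra hodd
  obtain ⟨r, hr⟩ := Nat.not_odd_iff_even.1 hodd
  exact h (lastStepCond_of_odd ⟨r - 1, by omega⟩)

theorem coverA_of_lt (h : i < m) : coverA G m i = A G i := if_pos h

theorem coverD_of_lt (h : i < m) : coverD G m i = D G i := if_pos h

theorem parity_of_mem_coverA (hconn : Conn G) (hA0 : (A0 G).Nonempty) (hm : 2 ≤ m)
    (hi : 1 ≤ i) (him : i ≤ m) (hv : v ∈ coverA G m i) :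
    (∀ w, G v w → Even i) ∧ ∀ w, G w v → Odd i := by
  rcases him.lt_or_eq with him | rfl
  · obtain ⟨k, rfl⟩ := Nat.exists_eq_add_of_le' hi
    rw [coverA_of_lt him] at hv
    exact parity_of_mem_A hv
  · simp only [coverA, lt_irrefl, if_false] at hv
    split_ifs at hv with h
    · exact ⟨fun _ _ => even_of_lastStepCond hconn hA0 hm h hv.1,
        fun w hwv => (hv.2 w hwv).elim⟩
    · exact ⟨fun w hvw => (hv.2 w hvw).elim, fun _ _ => odd_of_not_lastStepCond hi h⟩

theorem parity_of_mem_coverD (hconn : Conn G) (hA0 : (A0 G).Nonempty) (hm : 2 ≤ m)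
    (hi : 1 ≤ i) (him : i ≤ m) (hv : v ∈ coverD G m i) :
    (∀ w, G v w → Odd i) ∧ ∀ w, G w v → Even i := by
  rcases him.lt_or_eq with him | rfl
  · obtain ⟨k, rfl⟩ := Nat.exists_eq_add_of_le' hi
    rw [coverD_of_lt him] at hv
    exact parity_of_mem_D hv
  · simp only [coverD, lt_irrefl, if_false] at hv
    split_ifs at hv with h
    · exact ⟨fun w hvw => (hv.2 w hvw).elim,
        fun _ _ => even_of_lastStepCond hconn hA0 hm h hv.1⟩
    · exact ⟨fun _ _ => odd_of_not_lastStepCond hi h, fun w hwv => (hv.2 w hwv).elim⟩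

def layer (G : V → V → Prop) (m i : ℕ) : Set V := coverA G m i ∪ coverD G m i

theorem layer_subset_C (h : i < m) : layer G m i ⊆ C G i := by
  rw [layer, coverA_of_lt h, coverD_of_lt h]
  exact union_subset (A_subset_C i) (D_subset_C i)

theorem notMem_C_of_mem_layer (hi : 1 ≤ i) (him : i ≤ m) (hv : v ∈ layer G m i) :
    v ∉ C G (i - 1) := by
  rcases him.lt_or_eq with him | rfl
  · obtain ⟨k, rfl⟩ := Nat.exists_eq_add_of_le' hi
    rw [layer, coverA_of_lt him, coverD_of_lt him] at hv
    rcases hv with hv | hv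
    · exact notMem_C_of_mem_A hv
    · exact notMem_C_of_mem_D hv
  · simp only [layer, coverA, coverD, lt_irrefl, if_false] at hv
    split_ifs at hv <;> rcases hv with hv | hv <;> exact hv.1

theorem le_succ_of_mem_layer_of_adj (hu : u ∈ layer G m i) (hv : v ∈ layer G m j)
    (him : i ≤ m) (hj : 1 ≤ j) (hjm : j ≤ m) (huv : G u v ∨ G v u) : j ≤ i + 1 := by
  rcases him.lt_or_eq with him | rfl
  · by_contra! h
    exact notMem_C_of_mem_layer hj hjm hv
      (C_mono (by omega) (mem_C_succ_of_adj (layer_subset_C him hu) huv))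
  · omega

theorem exists_mem_layer (hm : 1 ≤ m) (hv : v ∉ A0 G) :
    ∃ i, 1 ≤ i ∧ i ≤ m ∧ v ∈ layer G m i := by
  by_cases hvC : v ∈ C G (m - 1)
  · obtain ⟨j, hj, hvj⟩ := exists_mem_A_or_D_of_mem_C hvC
    have hj0 : j ≠ 0 := by
      rintro rfl
      rcases hvj with h | h
      exacts [hv h, h]
    refine ⟨j, by omega, by omega, ?_⟩
    rwa [layer, coverA_of_lt (by omega), coverD_of_lt (by omega)]
  · refine ⟨m, hm, le_rfl, ?_⟩
    have hsrc_or_snk : (∀ u, ¬ G u v) ∨ ∀ w, ¬ G v w := by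
      by_contra! h
      exact hv h
    simp only [layer, coverA, coverD, lt_irrefl, if_false]
    split_ifs <;> rcases hsrc_or_snk with h | h
    exacts [Or.inl ⟨hvC, h⟩, Or.inr ⟨hvC, h⟩, Or.inr ⟨hvC, h⟩, Or.inl ⟨hvC, h⟩]

section Labelling

variable {n : ℕ} {f : V → Fin n}

def IsCoverMap (G : V → V → Prop) (m : ℕ) (f : V → Fin n) : Prop :=
  (∀ i ≤ m, ∀ v ∈ coverA G m i, (f v : ℕ) = i) ∧
    ∀ i, 1 ≤ i → i ≤ m → ∀ v ∈ coverD G m i, (f v : ℕ) = n - i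

theorem even_of_mem_layer_of_arc (hconn : Conn G) (hA0 : (A0 G).Nonempty) (hm : 2 ≤ m)
    (hn : n = 2 * m + 1) (hf : IsCoverMap G m f) (hi : 1 ≤ i) (him : i ≤ m)
    (hu : u ∈ layer G m i) (huv : G u v) : Even (f u : ℕ) := by
  rcases hu with hu | hu
  · rw [hf.1 i him u hu]
    exact (parity_of_mem_coverA hconn hA0 hm hi him hu).1 v huv
  · obtain ⟨r, hr⟩ := (parity_of_mem_coverD hconn hA0 hm hi him hu).1 v huv
    rw [hf.2 i hi him u hu]
    exact ⟨m - r, by omega⟩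

theorem odd_of_mem_layer_of_arc (hconn : Conn G) (hA0 : (A0 G).Nonempty) (hm : 2 ≤ m)
    (hn : n = 2 * m + 1) (hf : IsCoverMap G m f) (hi : 1 ≤ i) (him : i ≤ m)
    (hv : v ∈ layer G m i) (huv : G u v) : Odd (f v : ℕ) := by
  rcases hv with hv | hv
  · rw [hf.1 i him v hv]
    exact (parity_of_mem_coverA hconn hA0 hm hi him hv).2 u huv
  · obtain ⟨r, hr⟩ := (parity_of_mem_coverD hconn hA0 hm hi him hv).2 u huv
    rw [hf.2 i hi him v hv]
    exact ⟨m - r, by omega⟩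

theorem acArc_of_mem_layer (hconn : Conn G) (hA0 : (A0 G).Nonempty) (hm : 2 ≤ m)
    (hn : n = 2 * m + 1) (hf : IsCoverMap G m f)
    (hAD : ∀ i, 1 ≤ i → i ≤ m - 1 →
      ∀ u v, u ∈ coverA G m i → v ∈ coverD G m i → ¬ G u v ∧ ¬ G v u)
    (hi : 1 ≤ i) (him : i ≤ m) (hj : 1 ≤ j) (hjm : j ≤ m)
    (hu : u ∈ layer G m i) (hv : v ∈ layer G m j) (huv : G u v) :
    ACArc n (f u) (f v) := by
  have hji := le_succ_of_mem_layer_of_adj hu hv him hj hjm (Or.inl huv)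
  have hij := le_succ_of_mem_layer_of_adj hv hu hjm hi him (Or.inr huv)
  have heven := even_of_mem_layer_of_arc hconn hA0 hm hn hf hi him hu huv
  have hodd := odd_of_mem_layer_of_arc hconn hA0 hm hn hf hj hjm hv huv
  refine ACArc.of_even_of_odd heven hodd ?_
  obtain ⟨r, hr⟩ := heven
  obtain ⟨s, hs⟩ := hodd
  rcases hu with hu | hu <;> rcases hv with hv | hv
  · rw [hf.1 i him u hu, hf.1 j hjm v hv] at *
    omega
  · have hne : ¬ (i = j ∧ i ≤ m - 1) := fun ⟨hij, h⟩ =>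
      (hAD i hi h u v hu (hij ▸ hv)).1 huv
    rw [hf.1 i him u hu, hf.2 j hj hjm v hv] at *
    omega
  · have hne : ¬ (i = j ∧ i ≤ m - 1) := fun ⟨hij, h⟩ =>
      (hAD i hi h v u (hij ▸ hv) hu).2 huv
    rw [hf.2 i hi him u hu, hf.1 j hjm v hv] at *
    omega
  · rw [hf.2 i hi him u hu, hf.2 j hj hjm v hv] at *
    omega

end Labelling

end CyclicCover

open CyclicCover in
theorem stmt11_general {V : Type*} (G : V → V → Prop) (n : ℕ) (hodd : Odd n) (hn : 5 ≤ n)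
    (hconn : Conn G) (hA0 : (A0 G).Nonempty)
    (hind : ∀ u v, u ∈ A0 G → v ∈ A0 G → ¬ G u v)
    (hAD : ∀ i, 1 ≤ i → i ≤ (n - 1) / 2 - 1 →
      ∀ u v, u ∈ coverA G ((n - 1) / 2) i → v ∈ coverD G ((n - 1) / 2) i →
        ¬ G u v ∧ ¬ G v u) :
    ∀ f : V → Fin n,
      (∀ i, i ≤ (n - 1) / 2 → ∀ v ∈ coverA G ((n - 1) / 2) i, (f v : ℕ) = i) →
      (∀ i, 1 ≤ i → i ≤ (n - 1) / 2 → ∀ v ∈ coverD G ((n - 1) / 2) i, (f v : ℕ) = n - i) →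
      Hom G (ACArc n) f := by
  intro f hfA hfD u v huv
  set m := (n - 1) / 2
  have hnm : n = 2 * m + 1 := by rcases hodd with ⟨r, rfl⟩; omega
  have hm : 2 ≤ m := by omega
  have hf0 : ∀ w ∈ A0 G, (f w : ℕ) = 0 := fun w hw =>
    hfA 0 m.zero_le w (by rw [coverA_of_lt (show 0 < m by omega)]; exact hw)
  by_cases hu : u ∈ A0 G
  · have hv1 : (f v : ℕ) = 1 := hfA 1 (by omega) v <| by
      rw [coverA_of_lt (show 1 < m by omega)]
      exact ⟨fun hv => hind u v hu hv huv, u, hu, huv⟩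
    exact ACArc.of_even_of_odd (by rw [hf0 u hu]; exact Even.zero) (by rw [hv1]; exact odd_one)
      (Or.inl (by rw [hf0 u hu, hv1]))
  by_cases hv : v ∈ A0 G
  · have hu1 : (f u : ℕ) = n - 1 := hfD 1 le_rfl (by omega) u <| by
      rw [coverD_of_lt (show 1 < m by omega)]
      exact ⟨hu, v, hv, huv⟩
    refine Or.inl ⟨?_, by rw [hu1]; exact ⟨m, by omega⟩⟩
    rw [hf0 v hv, hu1, Nat.sub_add_cancel (by omega), Nat.mod_self]
  obtain ⟨i, hi, him, hui⟩ := exists_mem_layer (show 1 ≤ m by omega) hu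
  obtain ⟨j, hj, hjm, hvj⟩ := exists_mem_layer (show 1 ≤ m by omega) hv
  exact acArc_of_mem_layer hconn hA0 hm hnm ⟨hfA, hfD⟩ hAD hi him hj hjm hui hvj huv

/-- Let `n ≥ 5` be odd and `G` a connected oriented graph with `n`-cyclic cover
`(A₀, …, A_m, D_m, …, D₁)`, `m = (n-1)/2` (non-bipartition case: `A₀ ≠ ∅`). If `A₀` is
independent and there are no arcs between `Aᵢ` and `Dᵢ` for any `i ∈ {1, …, m-1}`, then
the map sending each vertex of `Aᵢ` to `a i` and each vertex of `Dᵢ` to `a (n - i)` is a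
homomorphism from `G` to `AC n`. -/
theorem stmt11 {V : Type*} (G : V → V → Prop) (n : ℕ) (hodd : Odd n) (hn : 5 ≤ n)
    (hor : IsOriented G) (hconn : Conn G) (hA0 : (A0 G).Nonempty)
    (hind : ∀ u v, u ∈ A0 G → v ∈ A0 G → ¬ G u v)
    (hAD : ∀ i, 1 ≤ i → i ≤ (n - 1) / 2 - 1 →
      ∀ u v, u ∈ coverA G ((n - 1) / 2) i → v ∈ coverD G ((n - 1) / 2) i →
        ¬ G u v ∧ ¬ G v u) :
    ∀ f : V → Fin n,
      (∀ i, i ≤ (n - 1) / 2 → ∀ v ∈ coverA G ((n - 1) / 2) i, (f v : ℕ) = i) →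
      (∀ i, 1 ≤ i → i ≤ (n - 1) / 2 → ∀ v ∈ coverD G ((n - 1) / 2) i, (f v : ℕ) = n - i) →
      Hom G (ACArc n) f :=
  stmt11_general G n hodd hn hconn hA0 hind hAD
end

section
/- Let n ≥ 5 be odd and G an oriented graph. Then G admits a homomorphism to AC_n if and only if Q_{n+1} does not admit a homomorphism to G. -/
/-! Suppose `Q (2K+4) ↛ G`. Let the rank of a vertex `v` be the least `a ≤ K` such that `v` ends
a walk of pattern `++(-+)^a` (or `K` if there is none). Sending every vertex with an in- and an
out-arc to `0`, every other vertex `v` with an in-arc to `2 rank v + 1`, and every remaining vertex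
to `2 (min of the ranks of its out-neighbours) + 2` is a homomorphism `G → AC (2K+3)`: the ranks
of two out-neighbours of a vertex differ by at most one, and if `u → v` with `v` not a sink, then
every out-neighbour of `u` has rank `K`.
Conversely, in `AC (2K+3)` the level `v / 2` of a sink `v` rises by at most one along each `-+`,
so a walk `++(-+)^K` cannot reach the vertex `0`, the only one with both an in- and an out-arc. -/

theorem HomTo.trans {α β γ : Type*} {A : α → α → Prop} {B : β → β → Prop}
    {C : γ → γ → Prop} (hAB : HomTo A B) (hBC : HomTo B C) : HomTo A C :=
  let ⟨f, hf⟩ := hAB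
  let ⟨g, hg⟩ := hBC
  ⟨g ∘ f, fun u v h => hg _ _ (hf u v h)⟩

section PatternWalk

variable {W : Type*} (G : W → W → Prop)

def IsPatternWalk (p : ℕ → Prop) (m : ℕ) (g : ℕ → W) : Prop :=
  ∀ i < m, (p i → G (g i) (g (i + 1))) ∧ (¬ p i → G (g (i + 1)) (g i))

variable {G}

theorem isPatternWalk_zero (p : ℕ → Prop) (g : ℕ → W) : IsPatternWalk G p 0 g :=
  fun _ hi => absurd hi (Nat.not_lt_zero _)

theorem IsPatternWalk.mono {p : ℕ → Prop} {m m' : ℕ} {g : ℕ → W}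
    (h : IsPatternWalk G p m g) (hm : m' ≤ m) : IsPatternWalk G p m' g :=
  fun i hi => h i (hi.trans_le hm)

theorem IsPatternWalk.snoc {p : ℕ → Prop} {m : ℕ} {g : ℕ → W} {x : W}
    (h : IsPatternWalk G p m g) (hfwd : p m → G (g m) x) (hbwd : ¬ p m → G x (g m)) :
    IsPatternWalk G p (m + 1) (Function.update g (m + 1) x) := by
  intro i hi
  rcases Nat.lt_succ_iff_lt_or_eq.mp hi with hi | rfl
  · rw [Function.update_of_ne (by omega), Function.update_of_ne (by omega)]
    exact h i hi
  · rw [Function.update_self, Function.update_of_ne (by omega)]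
    exact ⟨hfwd, hbwd⟩

theorem homTo_QArc_iff {m : ℕ} :
    HomTo (QArc (m + 1)) G ↔ ∃ g, IsPatternWalk G (QForward (m + 1)) m g := by
  constructor
  · rintro ⟨f, hf⟩
    refine ⟨fun i => f ⟨min i m, by omega⟩, fun i hi => ?_⟩
    have h₀ : min i m = i := by omega
    have h₁ : min (i + 1) m = i + 1 := by omega
    exact ⟨fun hp => hf _ _ (Or.inl ⟨by simp [h₀, h₁], by simpa [h₀] using hp⟩),
      fun hp => hf _ _ (Or.inr ⟨by simp [h₀, h₁], by simpa [h₀] using hp⟩)⟩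
  · rintro ⟨g, hg⟩
    refine ⟨fun u => g u, fun u v huv => ?_⟩
    rcases huv with ⟨e, hp⟩ | ⟨e, hp⟩
    · show G (g u) (g v)
      rw [e]; exact (hg u (by omega)).1 hp
    · show G (g u) (g v)
      rw [e]; exact (hg v (by omega)).2 hp

end PatternWalk

theorem qForward_iff (K i : ℕ) :
    QForward (2 * K + 4) i ↔ i ≤ 1 ∨ (i % 2 = 1 ∧ i ≤ 2 * K + 1) ∨ i = 2 * K + 2 := by
  simp only [QForward, Nat.odd_iff, Nat.even_iff]
  omega

section QPrefix

variable {W : Type*} (G : W → W → Prop)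

/-- `QPrefixEnd G a v`: some walk of pattern `++(-+)^a` ends at `v`. -/
def QPrefixEnd : ℕ → W → Prop
  | 0, v => ∃ x u, G x u ∧ G u v
  | a + 1, v => ∃ u w, G u w ∧ QPrefixEnd a w ∧ G u v

variable {G}

theorem QPrefixEnd.exists_adj {a : ℕ} {v : W} (h : QPrefixEnd G a v) : ∃ u, G u v := by
  cases a with
  | zero => obtain ⟨_, u, _, huv⟩ := h; exact ⟨u, huv⟩
  | succ a => obtain ⟨u, _, _, _, huv⟩ := h; exact ⟨u, huv⟩

theorem QPrefixEnd.mono {a b : ℕ} {v : W} (h : QPrefixEnd G a v) (hab : a ≤ b) :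
    QPrefixEnd G b v := by
  induction hab with
  | refl => exact h
  | step _ ih =>
    obtain ⟨u, huv⟩ := ih.exists_adj
    exact ⟨u, v, huv, ih, huv⟩

theorem qPrefixEnd_iff {K a : ℕ} {v : W} (ha : a ≤ K) :
    QPrefixEnd G a v ↔
      ∃ g, g (2 * a + 2) = v ∧ IsPatternWalk G (QForward (2 * K + 4)) (2 * a + 2) g := by
  induction a generalizing v with
  | zero =>
    constructor
    · rintro ⟨x, u, hxu, huv⟩
      have hg : IsPatternWalk G (QForward (2 * K + 4)) 2
          (Function.update (Function.update (fun _ => x) 1 u) 2 v) :=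
        ((isPatternWalk_zero _ fun _ => x).snoc
          (fun _ => hxu) (absurd ((qForward_iff K 0).2 (by omega)))).snoc
          (fun _ => by simpa using huv) (absurd ((qForward_iff K 1).2 (by omega)))
      exact ⟨_, Function.update_self .., hg⟩
    · rintro ⟨g, rfl, hg⟩
      exact ⟨g 0, g 1, (hg 0 (by omega)).1 ((qForward_iff K 0).2 (by omega)),
        (hg 1 (by omega)).1 ((qForward_iff K 1).2 (by omega))⟩
  | succ a ih =>
    have hbwd : ¬ QForward (2 * K + 4) (2 * a + 2) := by rw [qForward_iff]; omega
    have hfwd : QForward (2 * K + 4) (2 * a + 3) := by rw [qForward_iff]; omega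
    constructor
    · rintro ⟨u, w, huw, hw, huv⟩
      obtain ⟨g, rfl, hg⟩ := (ih (by omega)).1 hw
      have hg' := (hg.snoc (x := u) (absurd · hbwd) fun _ => huw).snoc (x := v)
        (fun _ => by simpa using huv) (absurd hfwd)
      exact ⟨_, Function.update_self .., hg'⟩
    · rintro ⟨g, rfl, hg⟩
      exact ⟨g (2 * a + 3), g (2 * a + 2), (hg (2 * a + 2) (by omega)).2 hbwd,
        (ih (by omega)).2 ⟨g, rfl, hg.mono (by omega)⟩, (hg (2 * a + 3) (by omega)).1 hfwd⟩

theorem homTo_QArc_iff_exists_qPrefixEnd {K : ℕ} :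
    HomTo (QArc (2 * K + 4)) G ↔ ∃ v y, QPrefixEnd G K v ∧ G v y := by
  have hlast : QForward (2 * K + 4) (2 * K + 2) := by rw [qForward_iff]; omega
  rw [homTo_QArc_iff (m := 2 * K + 3)]
  constructor
  · rintro ⟨g, hg⟩
    exact ⟨g (2 * K + 2), g (2 * K + 3),
      (qPrefixEnd_iff le_rfl).2 ⟨g, rfl, hg.mono (by omega)⟩,
      (hg (2 * K + 2) (by omega)).1 hlast⟩
  · rintro ⟨v, y, hv, hvy⟩
    obtain ⟨g, rfl, hg⟩ := (qPrefixEnd_iff le_rfl).1 hv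
    exact ⟨_, hg.snoc (fun _ => hvy) (absurd hlast)⟩

end QPrefix

section AlternatingCycle

variable {K : ℕ}

theorem acArc_iff {a b : Fin (2 * K + 3)} :
    ACArc (2 * K + 3) a b ↔
      (a : ℕ) % 2 = 0 ∧
        ((b : ℕ) = a + 1 ∨ (b : ℕ) + 1 = a ∨ ((a : ℕ) = 2 * K + 2 ∧ (b : ℕ) = 0)) := by
  have hmod : ∀ x : Fin (2 * K + 3), ((x : ℕ) + 1) % (2 * K + 3) =
      if (x : ℕ) = 2 * K + 2 then 0 else (x : ℕ) + 1 := fun x => by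
    split_ifs with h
    · rw [h, Nat.mod_self]
    · exact Nat.mod_eq_of_lt (by omega)
  simp only [ACArc, hmod, Nat.even_iff]
  split_ifs <;> omega

theorem ACArc.eq_zero_and_eq_one_of_acArc {x y z : Fin (2 * K + 3)} (hxy : ACArc (2 * K + 3) x y)
    (hyz : ACArc (2 * K + 3) y z) : (y : ℕ) = 0 ∧ (z : ℕ) = 1 := by
  rw [acArc_iff] at hxy hyz
  omega

-- `0` and the sink `2K+1` of level `K` are the out-neighbours of `2K+2`, so level `K+1` for `0`
-- keeps levels of out-neighbours within one of each other.
def acLevel (K a : ℕ) : ℕ := if a = 0 then K + 1 else a / 2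

theorem acLevel_le_of_acArc {t s s' : Fin (2 * K + 3)} (hs : ACArc (2 * K + 3) t s)
    (hs' : ACArc (2 * K + 3) t s') : acLevel K s ≤ acLevel K s' + 1 := by
  rw [acArc_iff] at hs hs'
  unfold acLevel
  split_ifs <;> omega

theorem acLevel_le_of_qPrefixEnd {a : ℕ} {v : Fin (2 * K + 3)}
    (hv : QPrefixEnd (ACArc (2 * K + 3)) a v) : acLevel K v ≤ a := by
  induction a generalizing v with
  | zero =>
    obtain ⟨x, u, hxu, huv⟩ := hv
    simp [acLevel, (hxu.eq_zero_and_eq_one_of_acArc huv).2]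
  | succ a ih =>
    obtain ⟨u, w, huw, hw, huv⟩ := hv
    exact (acLevel_le_of_acArc huv huw).trans (Nat.add_le_add_right (ih hw) 1)

theorem not_homTo_QArc_ACArc (K : ℕ) : ¬ HomTo (QArc (2 * K + 4)) (ACArc (2 * K + 3)) := by
  rw [homTo_QArc_iff_exists_qPrefixEnd]
  rintro ⟨v, y, hv, hvy⟩
  obtain ⟨x, hxv⟩ := hv.exists_adj
  have hlevel := acLevel_le_of_qPrefixEnd hv
  simp [acLevel, (hxv.eq_zero_and_eq_one_of_acArc hvy).1] at hlevel

end AlternatingCycle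

section Labelling

variable {W : Type*} (G : W → W → Prop) (K : ℕ)

noncomputable def qRank (v : W) : ℕ := sInf {a | QPrefixEnd G a v ∨ a = K}

noncomputable def qOutRank (u : W) : ℕ := sInf (qRank G K '' {t | G u t})

open Classical in
noncomputable def acLabel (v : W) : ℕ :=
  if ∃ x, G x v then (if ∃ y, G v y then 0 else 2 * qRank G K v + 1)
  else 2 * qOutRank G K v + 2

variable {G K}

theorem qRank_le (v : W) : qRank G K v ≤ K := Nat.sInf_le (Or.inr rfl)

theorem qRank_le_of_qPrefixEnd {a : ℕ} {v : W} (h : QPrefixEnd G a v) : qRank G K v ≤ a :=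
  Nat.sInf_le (Or.inl h)

theorem qPrefixEnd_qRank_or_eq (v : W) : QPrefixEnd G (qRank G K v) v ∨ qRank G K v = K :=
  Nat.sInf_mem (s := {a | QPrefixEnd G a v ∨ a = K}) ⟨K, Or.inr rfl⟩

theorem qRank_le_qRank_add_one {u t v : W} (hut : G u t) (huv : G u v) :
    qRank G K v ≤ qRank G K t + 1 := by
  rcases qPrefixEnd_qRank_or_eq (K := K) t with ht | ht
  · exact qRank_le_of_qPrefixEnd ⟨u, t, hut, ht, huv⟩
  · have := qRank_le (G := G) (K := K) v
    omega

theorem lt_of_qPrefixEnd_of_not_homTo (hQ : ¬ HomTo (QArc (2 * K + 4)) G) {a : ℕ} {v y : W}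
    (hv : QPrefixEnd G a v) (hvy : G v y) : K < a := by
  by_contra! ha
  exact hQ (homTo_QArc_iff_exists_qPrefixEnd.2 ⟨v, y, hv.mono ha, hvy⟩)

theorem qRank_eq_of_not_homTo (hQ : ¬ HomTo (QArc (2 * K + 4)) G) {u t v y : W} (hut : G u t)
    (huv : G u v) (hvy : G v y) : qRank G K t = K := by
  rcases qPrefixEnd_qRank_or_eq (K := K) t with ht | ht
  · have := lt_of_qPrefixEnd_of_not_homTo hQ (a := qRank G K t + 1) ⟨u, t, hut, ht, huv⟩ hvy
    have := qRank_le (G := G) (K := K) t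
    omega
  · exact ht

theorem qOutRank_le_qRank {u t : W} (hut : G u t) : qOutRank G K u ≤ qRank G K t :=
  Nat.sInf_le ⟨t, hut, rfl⟩

theorem exists_qOutRank_eq {u t : W} (hut : G u t) :
    ∃ t₀, G u t₀ ∧ qRank G K t₀ = qOutRank G K u :=
  Nat.sInf_mem (s := qRank G K '' {t | G u t}) ⟨_, t, hut, rfl⟩

theorem qOutRank_le (u : W) : qOutRank G K u ≤ K := by
  rcases Set.eq_empty_or_nonempty {t | G u t} with h | ⟨t, ht⟩
  · simp [qOutRank, h]
  · exact (qOutRank_le_qRank ht).trans (qRank_le t)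

theorem acLabel_lt (v : W) : acLabel G K v < 2 * K + 3 := by
  have := qRank_le (G := G) (K := K) v
  have := qOutRank_le (G := G) (K := K) v
  unfold acLabel
  split_ifs <;> omega

theorem homTo_ACArc_of_not_homTo_QArc (hQ : ¬ HomTo (QArc (2 * K + 4)) G) :
    HomTo G (ACArc (2 * K + 3)) := by
  refine ⟨fun v => ⟨acLabel G K v, acLabel_lt v⟩, fun u v huv => acArc_iff.2 ?_⟩
  have hv_in : ∃ x, G x v := ⟨u, huv⟩
  simp only [acLabel, if_pos hv_in, if_pos (⟨v, huv⟩ : ∃ y, G u y)]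
  by_cases hu_in : ∃ x, G x u
  · obtain ⟨x, hxu⟩ := hu_in
    have hv : QPrefixEnd G 0 v := ⟨x, u, hxu, huv⟩
    have hv_out : ¬ ∃ y, G v y := fun ⟨y, hvy⟩ =>
      Nat.not_lt_zero _ (lt_of_qPrefixEnd_of_not_homTo hQ hv hvy)
    have hv_rank := qRank_le_of_qPrefixEnd (K := K) hv
    rw [if_pos ⟨x, hxu⟩, if_neg hv_out]
    omega
  · obtain ⟨t₀, hut₀, ht₀⟩ := exists_qOutRank_eq (K := K) huv
    rw [if_neg hu_in]
    by_cases hv_out : ∃ y, G v y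
    · obtain ⟨y, hvy⟩ := hv_out
      have ht₀_rank := qRank_eq_of_not_homTo hQ hut₀ huv hvy
      rw [if_pos ⟨y, hvy⟩]
      omega
    · have hv_lower := qOutRank_le_qRank (K := K) huv
      have hv_upper := qRank_le_qRank_add_one (K := K) hut₀ huv
      have hv_le := qRank_le (G := G) (K := K) v
      rw [if_neg hv_out]
      omega

end Labelling

theorem stmt12_general (n : ℕ) (hodd : Odd n) (hn : 5 ≤ n) {W : Type*} (G : W → W → Prop) :
    HomTo G (ACArc n) ↔ ¬ HomTo (QArc (n + 1)) G := by
  obtain ⟨K, rfl⟩ : ∃ K, n = 2 * K + 3 := by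
    obtain ⟨k, rfl⟩ := hodd
    exact ⟨k - 1, by omega⟩
  exact ⟨fun hG hQ => not_homTo_QArc_ACArc K (hQ.trans hG), homTo_ACArc_of_not_homTo_QArc⟩

/-- Let `n ≥ 5` be odd and `G` an oriented graph. Then `G → AC n` iff `Q (n+1) ↛ G`. -/
theorem stmt12 (n : ℕ) (hodd : Odd n) (hn : 5 ≤ n) {W : Type*} (G : W → W → Prop)
    (hor : IsOriented G) : HomTo G (ACArc n) ↔ ¬ HomTo (QArc (n + 1)) G :=
  stmt12_general n hodd hn G
end

section
/- An undirected graph G admits a homomorphism to the 5-cycle if and only if G admits an orientation containing no semi-walk with pattern →→←→→. -/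
/-!
Orient `C₅` as `ACArc 5`, whose arcs are `0→1, 2→1, 2→3, 4→3, 4→0`. Its only directed
two-path is `4→0→1` and `4→1` is not an arc, so it contains no `→→←→→`, and neither does any
orientation of `G` pulled back along a homomorphism `G → C₅`.

Conversely, a `→→←→→`-free orientation has no directed path of length three (fold it into the
pattern). Label a vertex `4` if it starts a directed two-path, `1` if it ends one, `0` if it is
the middle of one, `2` if it is any other source and `3` otherwise; checking the possible arcs
shows that this labelling is a homomorphism to `ACArc 5`, hence to `C₅`.
-/

section Orientation

variable {V W : Type*} {G : SimpleGraph V} {H : SimpleGraph W}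

theorem IsOrientationOf.comap {A : W → W → Prop} (hA : IsOrientationOf A H) (f : G →g H) :
    IsOrientationOf (fun u v => G.Adj u v ∧ A (f u) (f v)) G := by
  refine ⟨fun u v h => h.1, fun u v huv => ?_⟩
  rcases hA.2 _ _ (f.map_adj huv) with ⟨h1, h2⟩ | ⟨h1, h2⟩
  · exact Or.inl ⟨⟨huv, h1⟩, fun h => h2 h.2⟩
  · exact Or.inr ⟨⟨huv.symm, h1⟩, fun h => h2 h.2⟩

def IsOrientationOf.graphHom {o : V → V → Prop} {A : W → W → Prop} (ho : IsOrientationOf o G)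
    (hA : ∀ a b, A a b → H.Adj a b) {f : V → W} (hf : Hom o A f) : G →g H where
  toFun := f
  map_rel' {u v} huv := by
    rcases ho.2 u v huv with ⟨h, -⟩ | ⟨h, -⟩
    · exact hA _ _ (hf _ _ h)
    · exact (hA _ _ (hf _ _ h)).symm

end Orientation

/-- `o` contains no semi-walk with pattern `→→←→→`. -/
def Q6Free {V : Type*} (o : V → V → Prop) : Prop :=
  ∀ a b c d e g, o a b → o b c → o d c → o d e → o e g → False

namespace Q6Free

variable {V W : Type*} {o : V → V → Prop}

theorem iff_not_exists :
    Q6Free o ↔ ¬ ∃ w : Fin 6 → V,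
      o (w 0) (w 1) ∧ o (w 1) (w 2) ∧ o (w 3) (w 2) ∧ o (w 3) (w 4) ∧ o (w 4) (w 5) :=
  ⟨fun h ⟨_, h1, h2, h3, h4, h5⟩ => h _ _ _ _ _ _ h1 h2 h3 h4 h5,
    fun h a b c d e g h1 h2 h3 h4 h5 => h ⟨![a, b, c, d, e, g], h1, h2, h3, h4, h5⟩⟩

theorem of_hom {A : W → W → Prop} (hA : Q6Free A) {f : V → W} (hf : Hom o A f) : Q6Free o :=
  fun _ _ _ _ _ _ h1 h2 h3 h4 h5 => hA _ _ _ _ _ _ (hf _ _ h1) (hf _ _ h2) (hf _ _ h3)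
    (hf _ _ h4) (hf _ _ h5)

theorem not_diPath3 (h : Q6Free o) {a b c d : V} (hab : o a b) (hbc : o b c) (hcd : o c d) :
    False :=
  h a b c b c d hab hbc hbc hbc hcd

end Q6Free

theorem isOrientationOf_ACArc_five : IsOrientationOf (ACArc 5) (UCycle 5) := by
  have hxor : ∀ u v : Fin 5, (UCycle 5).Adj u v → Xor (ACArc 5 u v) (ACArc 5 v u) := by
    simp only [ACArc, UCycle, SimpleGraph.fromRel_adj]; decide
  refine ⟨?_, hxor⟩
  simp only [ACArc, UCycle, SimpleGraph.fromRel_adj]; decide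

theorem ACArc_five_diPath2 :
    ∀ x y z : Fin 5, ACArc 5 x y → ACArc 5 y z → x = 4 ∧ y = 0 ∧ z = 1 := by
  simp only [ACArc]; decide

theorem not_ACArc_five_four_one : ¬ ACArc 5 4 1 := by
  simp only [ACArc]; decide

theorem q6Free_ACArc_five : Q6Free (ACArc 5) := by
  intro a b c d e g h1 h2 h3 h4 h5
  obtain ⟨-, -, rfl⟩ := ACArc_five_diPath2 _ _ _ h1 h2
  obtain ⟨rfl, -, -⟩ := ACArc_five_diPath2 _ _ _ h4 h5
  exact not_ACArc_five_four_one h3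

section Labelling

variable {V : Type*} (o : V → V → Prop)

def StartsDiPath2 (v : V) : Prop := ∃ a b, o v a ∧ o a b

def EndsDiPath2 (v : V) : Prop := ∃ a b, o a b ∧ o b v

open Classical in
noncomputable def c5Label (v : V) : Fin 5 :=
  if StartsDiPath2 o v then 4
  else if EndsDiPath2 o v then 1
  else if (∃ a, o a v) ∧ (∃ a, o v a) then 0
  else if ∃ a, o v a then 2
  else 3

variable {o}

theorem Q6Free.hom_c5Label (h : Q6Free o) : Hom o (ACArc 5) (c5Label o) := by
  intro u v huv
  have hu : ¬ EndsDiPath2 o u := fun ⟨_, _, hxy, hyu⟩ => h.not_diPath3 hxy hyu huv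
  have hv : ¬ StartsDiPath2 o v := fun ⟨_, _, hva, hab⟩ => h.not_diPath3 huv hva hab
  have hout : ∃ a, o u a := ⟨v, huv⟩
  have hin : ∃ a, o a v := ⟨u, huv⟩
  by_cases hsu : StartsDiPath2 o u
  · -- `x → y → v ← u → a → b`
    have hev : ¬ EndsDiPath2 o v := fun ⟨x, y, hxy, hyv⟩ =>
      let ⟨a, b, hua, hab⟩ := hsu
      h x y v u a b hxy hyv huv hua hab
    by_cases hov : ∃ a, o v a
    · simp only [c5Label, hsu, hv, hev, hin, hov, if_true, if_false, and_self]
      simp only [ACArc]; decide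
    · simp only [c5Label, hsu, hv, hev, hov, if_true, if_false, and_false]
      simp only [ACArc]; decide
  · by_cases hiu : ∃ a, o a u
    · have hev : EndsDiPath2 o v := let ⟨x, hxu⟩ := hiu; ⟨x, u, hxu, huv⟩
      simp only [c5Label, hsu, hu, hiu, hout, hv, hev, if_true, if_false, and_self]
      simp only [ACArc]; decide
    · have hov : ¬ ∃ a, o v a := fun ⟨a, hva⟩ => hsu ⟨v, a, huv, hva⟩
      by_cases hev : EndsDiPath2 o v
      · simp only [c5Label, hsu, hu, hiu, hout, hv, hev, if_true, if_false, false_and]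
        simp only [ACArc]; decide
      · simp only [c5Label, hsu, hu, hiu, hout, hv, hev, hov, if_true, if_false, false_and,
          and_false]
        simp only [ACArc]; decide

end Labelling

/-- An undirected graph `G` admits a homomorphism to the 5-cycle iff `G` admits an
orientation containing no semi-walk with pattern `→→←→→`. -/
theorem stmt17 {V : Type} (G : SimpleGraph V) :
    Nonempty (G →g UCycle 5) ↔
      ∃ o : V → V → Prop, IsOrientationOf o G ∧
        ¬ ∃ w : Fin 6 → V,
          o (w 0) (w 1) ∧ o (w 1) (w 2) ∧ o (w 3) (w 2) ∧ o (w 3) (w 4) ∧ o (w 4) (w 5) := by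
  simp only [← Q6Free.iff_not_exists]
  constructor
  · rintro ⟨f⟩
    exact ⟨_, isOrientationOf_ACArc_five.comap f,
      q6Free_ACArc_five.of_hom (f := f) fun _ _ h => h.2⟩
  · rintro ⟨o, ho, hfree⟩
    exact ⟨ho.graphHom isOrientationOf_ACArc_five.1 hfree.hom_c5Label⟩
end
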